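/- A nonzero finitely generated fractional ideal I of an integral domain D is a cancellation ideal (i.e., IG = IH implies G = H for all nonzero fractional ideals G, H) if and only if I is invertible. -/

import Mathlib

set_option linter.unusedSectionVars false
set_option maxHeartbeats 1000000

open scoped BigOperators

theorem det_aux {R V : Type*} [CommRing R] [AddCommGroup V] [Module R V]
    (M : Ideal R) (u : R) (Y : Submodule R V) {n : ℕ} (x : Fin n → V)
    (h : ∀ i, u • x i ∈ Y ⊔ M • Submodule.span R (Set.range x)) :
    ∃ w : R, w - u ^ n ∈ M ∧ ∀ i, w • x i ∈ Y := by
  classical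
  have h' : ∀ i, ∃ A : Fin n → R, (∀ j, A j ∈ M) ∧ u • x i - ∑ j, A j • x j ∈ Y := by
    intro i
    obtain ⟨y, hy, z, hz, hyz⟩ := Submodule.mem_sup.mp (h i)
    obtain ⟨a, ha, haz⟩ := (Submodule.mem_ideal_smul_span_iff_exists_sum M x z).mp hz
    refine ⟨fun j => a j, fun j => ha j, ?_⟩
    have hzz : (∑ j, a j • x j) = z := by
      rw [← haz]; exact (Finsupp.sum_fintype a (fun j c => c • x j) (fun _ => zero_smul R _)).symm
    have : u • x i - ∑ j, a j • x j = y := by rw [hzz, ← hyz]; abel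
    rw [this]; exact hy
  choose A hAM hAY using h'
  set B : Matrix (Fin n) (Fin n) R := fun i j => (if i = j then u else 0) - A i j with hBdef
  have hB : ∀ k, ∑ j, B k j • x j ∈ Y := by
    intro k
    have : ∑ j, B k j • x j = u • x k - ∑ j, A k j • x j := by
      simp only [hBdef, sub_smul, ite_smul, zero_smul, Finset.sum_sub_distrib,
        Finset.sum_ite_eq, Finset.mem_univ, if_pos]
    rw [this]; exact hAY k
  refine ⟨B.det, ?_, ?_⟩
  · have hmap : B.map (Ideal.Quotient.mk M) = (Ideal.Quotient.mk M u) • (1 : Matrix (Fin n) (Fin n) (R ⧸ M)) := by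
      ext i j
      simp only [Matrix.map_apply]
      simp only [hBdef, map_sub, Matrix.smul_apply, Matrix.one_apply]
      rw [Ideal.Quotient.eq_zero_iff_mem.mpr (hAM i j)]
      simp [apply_ite (Ideal.Quotient.mk M), mul_ite]
    have : Ideal.Quotient.mk M B.det = Ideal.Quotient.mk M (u ^ n) := by
      rw [RingHom.map_det, RingHom.mapMatrix_apply, hmap, Matrix.det_smul, Matrix.det_one, mul_one, map_pow, Fintype.card_fin]
    exact Ideal.Quotient.eq.mp this
  · intro i
    have key : B.det • x i = ∑ k, (B.adjugate i k) • (∑ j, B k j • x j) := by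
      have h1 : ∀ j, ((B.adjugate * B) i j) • x j = ∑ k, (B.adjugate i k * B k j) • x j := by
        intro j; rw [Matrix.mul_apply, Finset.sum_smul]
      calc B.det • x i = ∑ j, ((B.det • (1 : Matrix (Fin n) (Fin n) R)) i j) • x j := by
            simp only [Matrix.smul_apply, Matrix.one_apply, smul_eq_mul, mul_ite, mul_one, mul_zero,
              ite_smul, zero_smul, Finset.sum_ite_eq, Finset.mem_univ, if_pos]
        _ = ∑ j, ((B.adjugate * B) i j) • x j := by rw [Matrix.adjugate_mul]
        _ = ∑ j, ∑ k, (B.adjugate i k * B k j) • x j := Finset.sum_congr rfl fun j _ => h1 j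
        _ = ∑ k, ∑ j, (B.adjugate i k * B k j) • x j := Finset.sum_comm
        _ = ∑ k, (B.adjugate i k) • (∑ j, B k j • x j) := by
            refine Finset.sum_congr rfl fun k _ => ?_
            rw [Finset.smul_sum]
            exact Finset.sum_congr rfl fun j _ => by rw [mul_smul]
    rw [key]
    exact Submodule.sum_mem Y fun k _ => Submodule.smul_mem Y _ (hB k)

theorem det_trick {R V : Type*} [CommRing R] [AddCommGroup V] [Module R V]
    (M : Ideal R) (u : R) (Y X : Submodule R V) (hX : X.FG)
    (h : ∀ z ∈ X, u • z ∈ Y ⊔ M • X) :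
    ∃ (w : R) (n : ℕ), w - u ^ n ∈ M ∧ ∀ z ∈ X, w • z ∈ Y := by
  obtain ⟨n, x, hx⟩ := Submodule.fg_iff_exists_fin_generating_family.mp hX
  obtain ⟨w, hw, hwY⟩ := det_aux M u Y x (fun i => by
    rw [hx]; exact h _ (hx ▸ Submodule.subset_span ⟨i, rfl⟩))
  refine ⟨w, n, hw, ?_⟩
  intro z hz
  rw [← hx] at hz
  induction hz using Submodule.span_induction with
  | mem z hz => obtain ⟨i, rfl⟩ := hz; exact hwY i
  | zero => simpa using Submodule.zero_mem Y
  | add a b _ _ ha hb => rw [smul_add]; exact Submodule.add_mem Y ha hb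
  | smul r a _ ha => rw [smul_comm]; exact Submodule.smul_mem Y r ha

open FractionalIdeal

section FIHelpers

variable {D : Type*} [CommRing D] [IsDomain D] {K : Type*} [Field K] [Algebra D K]
  [IsFractionRing D K]

local notation "FI" => FractionalIdeal (nonZeroDivisors D) K

/-- span of a single element of K -/
noncomputable abbrev sspan (x : K) : FractionalIdeal (nonZeroDivisors D) K :=
  spanSingleton (nonZeroDivisors D) x

noncomputable abbrev dspan (v : D) : FractionalIdeal (nonZeroDivisors D) K :=
  sspan (algebraMap D K v)

lemma addle {A B C : FI} (h1 : A ≤ C) (h2 : B ≤ C) : A + B ≤ C := by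
  rw [← sup_eq_add]; exact sup_le h1 h2

lemma leaddl {A B : FI} : A ≤ A + B := by rw [← sup_eq_add]; exact le_sup_left

lemma leaddr {A B : FI} : B ≤ A + B := by rw [← sup_eq_add]; exact le_sup_right

lemma memAdd {A B : FI} {a b : K} (ha : a ∈ A) (hb : b ∈ B) : a + b ∈ A + B :=
  (FractionalIdeal.mem_add A B _).mpr ⟨a, ha, b, hb, rfl⟩

lemma mulne0 {A B : FI} (hA : A ≠ 0) (hB : B ≠ 0) : A * B ≠ 0 := by
  obtain ⟨a, haA, ha⟩ : ∃ a, a ∈ A ∧ a ≠ 0 := by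
    by_contra h; push_neg at h
    exact hA (FractionalIdeal.eq_zero_iff.mpr h)
  obtain ⟨b, hbB, hb⟩ : ∃ b, b ∈ B ∧ b ≠ 0 := by
    by_contra h; push_neg at h
    exact hB (FractionalIdeal.eq_zero_iff.mpr h)
  intro hAB
  have : a * b ∈ (0 : FI) := hAB ▸ FractionalIdeal.mul_mem_mul haA hbB
  rw [FractionalIdeal.mem_zero_iff] at this
  exact (mul_ne_zero ha hb) this

lemma dspan_mul (v s : D) : (dspan (v * s) : FI) = dspan v * dspan s := by
  rw [dspan, _root_.map_mul]; exact (spanSingleton_mul_spanSingleton _ _).symm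

lemma dspan_le_one (v : D) : (dspan v : FI) ≤ 1 :=
  spanSingleton_le_iff_mem.mpr (FractionalIdeal.coe_mem_one _ v)

lemma sspan_neg (x : K) : (sspan (-x) : FI) = sspan x := by
  apply le_antisymm <;> rw [spanSingleton_le_iff_mem, mem_spanSingleton]
  · exact ⟨-1, by simp⟩
  · exact ⟨-1, by simp⟩

lemma lemem {A B : FI} (h : A ≤ B) {a : K} (ha : a ∈ A) : a ∈ B := h ha

lemma memSub {A : FI} {a b : K} (ha : a ∈ A) (hb : b ∈ A) : a - b ∈ A := by
  rw [← FractionalIdeal.mem_coe] at ha hb ⊢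
  exact Submodule.sub_mem _ ha hb

lemma spadd (x y : K) : (sspan x + sspan y : FI) = sspan x + sspan (x + y) := by
  apply le_antisymm <;> apply addle leaddl <;> rw [spanSingleton_le_iff_mem]
  · have h1 : (x + y) - x ∈ (sspan x + sspan (x + y) : FI) :=
      memSub (lemem leaddr (mem_spanSingleton_self _ _))
        (lemem leaddl (mem_spanSingleton_self _ _))
    simpa using h1
  · exact memAdd (mem_spanSingleton_self _ _) (mem_spanSingleton_self _ _)

end FIHelpers

section Cancel

variable {D : Type*} [CommRing D] [IsDomain D] {K : Type*} [Field K] [Algebra D K]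
  [IsFractionRing D K]

local notation "FI" => FractionalIdeal (nonZeroDivisors D) K

variable {I : FractionalIdeal (nonZeroDivisors D) K}

/-- order cancellation -/
lemma OC (hC : ∀ G H : FI, G ≠ 0 → H ≠ 0 → I * G = I * H → G = H)
    {G H : FI} (hH : H ≠ 0) (h : I * G ≤ I * H) : G ≤ H := by
  have h1 : I * (G + H) = I * H := by
    rw [mul_add, ← sup_eq_add]
    exact sup_eq_right.mpr h
  have h2 : G + H = H := by
    refine hC _ _ ?_ hH h1
    intro h0
    exact hH (le_antisymm (le_trans (leaddr (A := G)) (le_of_eq h0)) (zero_le H))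
  calc G ≤ G + H := leaddl
    _ = H := h2

/-- v-order-cancellation through an intermediate module W with V*I ≤ W ≤ I. -/
lemma OvC (hC : ∀ G H : FI, G ≠ 0 → H ≠ 0 → I * G = I * H → G = H)
    {V W G H : FI} (hVW : V * I ≤ W) (hWI : W ≤ I) (hH : H ≠ 0)
    (h : W * G ≤ W * H) : V * G ≤ H := by
  refine OC hC hH ?_
  calc I * (V * G) = (V * I) * G := by ring
    _ ≤ W * G := mul_le_mul_left hVW G
    _ ≤ W * H := h
    _ ≤ I * H := mul_le_mul_left hWI H

lemma mulle {A B C E : FI} (h1 : A ≤ C) (h2 : B ≤ E) : A * B ≤ C * E :=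
  le_trans (mul_le_mul_left h1 B) (mul_le_mul_right h2 C)

lemma sspan_le_mul {x y : K} {A B : FI} (hx : x ∈ A) (hy : y ∈ B) :
    (sspan (x * y) : FI) ≤ A * B :=
  spanSingleton_le_iff_mem.mpr (FractionalIdeal.mul_mem_mul hx hy)

lemma exp2le {x y : K} {Q W : FI} (hW : W = sspan x + sspan y + Q) :
    W * W ≤ sspan (x*x) + sspan (x*y) + sspan (y*y) + Q * W := by
  have hx : x ∈ W := hW ▸ lemem (le_trans leaddl leaddl) (mem_spanSingleton_self _ _)
  have hy : y ∈ W := hW ▸ lemem (le_trans leaddr leaddl) (mem_spanSingleton_self _ _)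
  have hQ : Q ≤ W := hW ▸ leaddr
  have hxW : (sspan x : FI) ≤ W := spanSingleton_le_iff_mem.mpr hx
  have hyW : (sspan y : FI) ≤ W := spanSingleton_le_iff_mem.mpr hy
  have expand : W * W = sspan x * sspan x + sspan x * sspan y + sspan x * Q
      + (sspan y * sspan x + sspan y * sspan y + sspan y * Q)
      + (Q * sspan x + Q * sspan y + Q * Q) := by rw [hW]; ring
  rw [expand]
  have t1 : (sspan x * sspan x : FI) ≤ sspan (x*x) := le_of_eq (spanSingleton_mul_spanSingleton _ _)
  have t2 : (sspan x * sspan y : FI) ≤ sspan (x*y) := le_of_eq (spanSingleton_mul_spanSingleton _ _)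
  have t3 : (sspan y * sspan x : FI) ≤ sspan (x*y) := by
    rw [spanSingleton_mul_spanSingleton, mul_comm y x]
  have t4 : (sspan y * sspan y : FI) ≤ sspan (y*y) := le_of_eq (spanSingleton_mul_spanSingleton _ _)
  refine addle (addle (addle (addle ?_ ?_) ?_) (addle (addle ?_ ?_) ?_)) (addle (addle ?_ ?_) ?_)
  · exact le_trans t1 (le_trans leaddl (le_trans leaddl leaddl))
  · exact le_trans t2 (le_trans leaddr (le_trans leaddl leaddl))
  · exact le_trans (le_of_eq (mul_comm _ _)) (le_trans (mulle (le_refl Q) hxW) leaddr)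
  · exact le_trans t3 (le_trans leaddr (le_trans leaddl leaddl))
  · exact le_trans t4 (le_trans leaddr leaddl)
  · exact le_trans (le_of_eq (mul_comm _ _)) (le_trans (mulle (le_refl Q) hyW) leaddr)
  · exact le_trans (mulle (le_refl Q) hxW) leaddr
  · exact le_trans (mulle (le_refl Q) hyW) leaddr
  · exact le_trans (mulle (le_refl Q) hQ) leaddr

lemma key3 {x y : K} {Q W : FI} (hW : W = sspan x + sspan y + Q) :
    W * (W * W) ≤ W * (sspan (x*x) + sspan (y*y) + Q * W) := by
  have hx : x ∈ W := hW ▸ lemem (le_trans leaddl leaddl) (mem_spanSingleton_self _ _)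
  have hy : y ∈ W := hW ▸ lemem (le_trans leaddr leaddl) (mem_spanSingleton_self _ _)
  have hxxH : x*x ∈ (sspan (x*x) + sspan (y*y) + Q * W : FI) :=
    lemem (le_trans leaddl leaddl) (mem_spanSingleton_self _ _)
  have hyyH : y*y ∈ (sspan (x*x) + sspan (y*y) + Q * W : FI) :=
    lemem (le_trans leaddr leaddl) (mem_spanSingleton_self _ _)
  have h2 := exp2le hW
  refine le_trans (mul_le_mul_right h2 W) ?_
  show W * (sspan (x*x) + sspan (x*y) + sspan (y*y) + Q * W)
      ≤ W * (sspan (x*x) + sspan (y*y) + Q * W)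
  have e : W * (sspan (x*x) + sspan (x*y) + sspan (y*y) + Q * W)
      = W * sspan (x*x) + W * sspan (x*y) + W * sspan (y*y) + W * (Q * W) := by ring
  rw [e]
  refine addle (addle (addle ?_ ?_) ?_) ?_
  · exact mul_le_mul_right (le_trans leaddl leaddl) W
  · have e2 : W * sspan (x*y) = sspan x * sspan (x*y) + sspan y * sspan (x*y)
        + Q * sspan (x*y) := by rw [hW]; ring
    rw [e2]
    refine addle (addle ?_ ?_) ?_
    · refine le_trans (le_of_eq ?_) (sspan_le_mul hy hxxH)
      rw [spanSingleton_mul_spanSingleton, show x*(x*y) = y*(x*x) by ring]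
    · refine le_trans (le_of_eq ?_) (sspan_le_mul hx hyyH)
      rw [spanSingleton_mul_spanSingleton, show y*(x*y) = x*(y*y) by ring]
    · refine le_trans (mulle (le_refl Q) (sspan_le_mul hx hy)) ?_
      refine le_trans (le_of_eq (show (Q * (W*W) : FI) = W * (Q*W) by ring)) ?_
      exact mul_le_mul_right leaddr W
  · exact mul_le_mul_right (le_trans leaddr leaddl) W
  · exact mul_le_mul_right leaddr W

lemma memDsmul {A : FractionalIdeal (nonZeroDivisors D) K} (v : D) {a : K} (ha : a ∈ A) :
    algebraMap D K v * a ∈ A := by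
  rw [← Algebra.smul_def, ← FractionalIdeal.mem_coe]
  exact Submodule.smul_mem _ _ (FractionalIdeal.mem_coe.mpr ha)

lemma lemA {v s : D} {x y : K} {Q W : FI}
    (hW : W = sspan x + sspan y + Q)
    (hmem : algebraMap D K v * (x*y) - algebraMap D K s * (y*y) ∈ (sspan x * W + Q * W : FI)) :
    dspan s * (W * W) ≤ W * (sspan x + Q) := by
  have hxW : x ∈ W := hW ▸ lemem (le_trans leaddl leaddl) (mem_spanSingleton_self _ _)
  have hyW : y ∈ W := hW ▸ lemem (le_trans leaddr leaddl) (mem_spanSingleton_self _ _)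
  have hxsx : x ∈ (sspan x + Q : FI) := lemem leaddl (mem_spanSingleton_self _ _)
  have hT0 : (sspan x * W + Q * W : FI) ≤ W * (sspan x + Q) :=
    addle (le_trans (le_of_eq (mul_comm _ _)) (mul_le_mul_right leaddl W))
      (le_trans (le_of_eq (mul_comm _ _)) (mul_le_mul_right leaddr W))
  have hvxy : algebraMap D K v * (x*y) ∈ (sspan x * W + Q * W : FI) := by
    have : x * (algebraMap D K v * y) ∈ (sspan x * W : FI) :=
      FractionalIdeal.mul_mem_mul (mem_spanSingleton_self _ _) (memDsmul v hyW)
    refine lemem leaddl ?_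
    rwa [show algebraMap D K v * (x*y) = x * (algebraMap D K v * y) by ring]
  have hsyy : algebraMap D K s * (y*y) ∈ (sspan x * W + Q * W : FI) := by
    have := memSub hvxy hmem
    simpa using this
  have e : dspan s * (W * W) = dspan s * (sspan x * W) + dspan s * (sspan y * W)
      + dspan s * (Q * W) := by rw [hW]; ring
  rw [e]
  refine addle (addle ?_ ?_) ?_
  · calc dspan s * (sspan x * W) ≤ 1 * (sspan x * W) := mul_le_mul_left (dspan_le_one s) _
      _ = W * sspan x := by ring
      _ ≤ W * (sspan x + Q) := mul_le_mul_right leaddl W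
  · have e2 : dspan s * (sspan y * W) = dspan s * (sspan y * sspan x)
        + dspan s * (sspan y * sspan y) + dspan s * (sspan y * Q) := by rw [hW]; ring
    rw [e2]
    refine addle (addle ?_ ?_) ?_
    · rw [spanSingleton_mul_spanSingleton, spanSingleton_mul_spanSingleton,
        spanSingleton_le_iff_mem]
      rw [show algebraMap D K s * (y*x) = (algebraMap D K s * y) * x by ring]
      exact FractionalIdeal.mul_mem_mul (memDsmul s hyW) hxsx
    · rw [spanSingleton_mul_spanSingleton, spanSingleton_mul_spanSingleton,
        spanSingleton_le_iff_mem]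
      exact lemem hT0 hsyy
    · calc dspan s * (sspan y * Q) ≤ 1 * (sspan y * Q) := mul_le_mul_left (dspan_le_one s) _
        _ = Q * sspan y := by ring
        _ ≤ W * Q := by
            rw [mul_comm]
            exact mulle (spanSingleton_le_iff_mem.mpr hyW) (le_refl Q)
        _ ≤ W * (sspan x + Q) := mul_le_mul_right leaddr W
  · calc dspan s * (Q * W) ≤ 1 * (Q * W) := mul_le_mul_left (dspan_le_one s) _
      _ = W * Q := by ring
      _ ≤ W * (sspan x + Q) := mul_le_mul_right leaddr W

lemma memAddSame {A : FractionalIdeal (nonZeroDivisors D) K} {a b : K}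
    (ha : a ∈ A) (hb : b ∈ A) : a + b ∈ A := by
  rw [← FractionalIdeal.mem_coe] at ha hb ⊢
  exact Submodule.add_mem _ ha hb

lemma sspan_add_ne_zero {x : K} (hx : x ≠ 0) (Q : FI) : (sspan x + Q : FI) ≠ 0 := by
  intro h
  have : (sspan x : FI) ≤ 0 := h ▸ leaddl
  have : x ∈ (0 : FI) := this (mem_spanSingleton_self _ x)
  rw [FractionalIdeal.mem_zero_iff] at this
  exact hx this

lemma engine (hC : ∀ G H : FI, G ≠ 0 → H ≠ 0 → I * G = I * H → G = H) (hI : I ≠ 0)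
    (M : Ideal D) (hM : M.IsPrime)
    {v : D} (hv : v ∉ M) {x y : K} (hx : x ≠ 0) (hy : y ≠ 0) {Q W : FI}
    (hW : W = sspan x + sspan y + Q)
    (hvW : dspan v * I ≤ W) (hWI : W ≤ I) :
    (∃ w, w ∉ M ∧ dspan w * W ≤ sspan x + Q) ∨
    (∃ w, w ∉ M ∧ dspan w * W ≤ sspan y + Q) ∨
    (algebraMap D K v * (x*y) ∈ (↑M * (W*W) + Q*W : FI)) := by
  have hxW : x ∈ W := hW ▸ lemem (le_trans leaddl leaddl) (mem_spanSingleton_self _ _)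
  have hyW : y ∈ W := hW ▸ lemem (le_trans leaddr leaddl) (mem_spanSingleton_self _ _)
  have hH0 : (sspan (x*x) + sspan (y*y) + Q*W : FI) ≠ 0 := by
    intro h
    have h1 : (sspan (x*x) : FI) ≤ 0 := h ▸ le_trans leaddl leaddl
    have h2 : x*x ∈ (0 : FI) := h1 (mem_spanSingleton_self _ _)
    rw [FractionalIdeal.mem_zero_iff] at h2
    exact hx (by simpa [mul_self_eq_zero] using h2)
  have KR : dspan v * (W*W) ≤ sspan (x*x) + sspan (y*y) + Q*W :=
    OvC hC hvW hWI hH0 (key3 hW)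
  have hz : algebraMap D K v * (x*y) ∈ (sspan (x*x) + sspan (y*y) + Q*W : FI) :=
    KR (FractionalIdeal.mul_mem_mul (mem_spanSingleton_self _ _)
      (FractionalIdeal.mul_mem_mul hxW hyW))
  rw [FractionalIdeal.mem_add] at hz
  obtain ⟨i, hi, q, hq, hiq⟩ := hz
  rw [FractionalIdeal.mem_add] at hi
  obtain ⟨i1, hi1, i2, hi2, hii⟩ := hi
  rw [mem_spanSingleton] at hi1 hi2
  obtain ⟨r, hr1⟩ := hi1
  obtain ⟨s, hs1⟩ := hi2
  have hzfull : algebraMap D K v * (x*y) = r • (x*x) + s • (y*y) + q := by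
    rw [hr1, hs1, hii, hiq]
  by_cases hs : s ∈ M
  · by_cases hr : r ∈ M
    · -- both coefficients in M
      right; right
      rw [hzfull]
      refine memAdd (memAddSame ?_ ?_) hq
      · rw [Algebra.smul_def]
        exact FractionalIdeal.mul_mem_mul
          ((FractionalIdeal.mem_coeIdeal _).mpr ⟨r, hr, rfl⟩)
          (FractionalIdeal.mul_mem_mul hxW hxW)
      · rw [Algebra.smul_def]
        exact FractionalIdeal.mul_mem_mul
          ((FractionalIdeal.mem_coeIdeal _).mpr ⟨s, hs, rfl⟩)
          (FractionalIdeal.mul_mem_mul hyW hyW)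
    · -- r ∉ M : merge keeping y
      right; left
      have hW' : W = sspan y + sspan x + Q := by rw [hW]; ring
      have hmem' : algebraMap D K v * (y*x) - algebraMap D K r * (x*x)
          ∈ (sspan y * W + Q * W : FI) := by
        have he : algebraMap D K v * (y*x) - algebraMap D K r * (x*x)
            = s • (y*y) + q := by
          rw [show algebraMap D K v * (y*x) = algebraMap D K v * (x*y) by ring, hzfull,
            Algebra.smul_def]
          ring
        rw [he]
        refine memAdd ?_ hq
        rw [show s • (y*y) = y * (algebraMap D K s * y) by rw [Algebra.smul_def]; ring]
        exact FractionalIdeal.mul_mem_mul (mem_spanSingleton_self _ _) (memDsmul s hyW)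
      have LA := lemA hW' hmem'
      have hne := sspan_add_ne_zero hy Q
      have hOv : dspan v * (dspan r * W) ≤ sspan y + Q := by
        refine OvC hC hvW hWI hne ?_
        exact le_trans (le_of_eq (by ring)) LA
      refine ⟨v * r, fun hmem => ?_, ?_⟩
      · rcases hM.mem_or_mem hmem with h | h
        exacts [hv h, hr h]
      · rw [dspan_mul]
        exact le_trans (le_of_eq (by ring)) hOv
  · -- s ∉ M : merge keeping x
    left
    have hmem' : algebraMap D K v * (x*y) - algebraMap D K s * (y*y)
        ∈ (sspan x * W + Q * W : FI) := by
      have he : algebraMap D K v * (x*y) - algebraMap D K s * (y*y)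
          = r • (x*x) + q := by
        rw [hzfull, Algebra.smul_def s]
        ring
      rw [he]
      refine memAdd ?_ hq
      rw [show r • (x*x) = x * (algebraMap D K r * x) by rw [Algebra.smul_def]; ring]
      exact FractionalIdeal.mul_mem_mul (mem_spanSingleton_self _ _) (memDsmul r hxW)
    have LA := lemA hW hmem'
    have hne := sspan_add_ne_zero hx Q
    have hOv : dspan v * (dspan s * W) ≤ sspan x + Q := by
      refine OvC hC hvW hWI hne ?_
      exact le_trans (le_of_eq (by ring)) LA
    refine ⟨v * s, fun hmem => ?_, ?_⟩
    · rcases hM.mem_or_mem hmem with h | h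
      exacts [hv h, hs h]
    · rw [dspan_mul]
      exact le_trans (le_of_eq (by ring)) hOv

noncomputable def slist (L : List K) : FractionalIdeal (nonZeroDivisors D) K :=
  (L.map sspan).sum

lemma slist_nil : (slist ([] : List K) : FI) = 0 := rfl

lemma slist_cons (x : K) (L : List K) : (slist (x :: L) : FI) = sspan x + slist L := by
  simp [slist]

lemma addself {A : FI} : A + A = A := by rw [← sup_eq_add]; exact sup_idem A

lemma sspan_zero : (sspan (0:K) : FI) = 0 := spanSingleton_zero

lemma ne_zero_of_le {A B : FI} (hA : A ≠ 0) (h : A ≤ B) : B ≠ 0 := by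
  intro hB
  exact hA (le_antisymm (hB ▸ h) (zero_le A))

lemma MIleI (M : Ideal D) : (↑M * I : FI) ≤ I :=
  le_trans (mulle coeIdeal_le_one (le_refl I)) (le_of_eq (one_mul I))

lemma nilcase (hC : ∀ G H : FI, G ≠ 0 → H ≠ 0 → I * G = I * H → G = H)
    (M : Ideal D) (hM0 : M ≠ ⊥) {v : D} (hv : v ∉ M)
    (h : dspan v * I ≤ (M : FractionalIdeal (nonZeroDivisors D) K) * I) : False := by
  have h1 : (dspan v : FI) ≤ ↑M := by
    refine OC hC (coeIdeal_ne_zero.mpr hM0) ?_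
    calc I * dspan v = dspan v * I := mul_comm _ _
      _ ≤ (M : FractionalIdeal (nonZeroDivisors D) K) * I := h
      _ = I * ↑M := mul_comm _ _
  have h2 : algebraMap D K v ∈ (↑M : FI) := h1 (mem_spanSingleton_self _ _)
  rw [FractionalIdeal.mem_coeIdeal] at h2
  obtain ⟨m, hmM, hm⟩ := h2
  rw [IsFractionRing.injective D K hm] at hmM
  exact hv hmM

lemma mainstep (hC : ∀ G H : FI, G ≠ 0 → H ≠ 0 → I * G = I * H → G = H) (hI : I ≠ 0)
    (M : Ideal D) (hM : M.IsMaximal) (hM0 : M ≠ ⊥) :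
    ∀ (n : ℕ) (L : List K), L.length ≤ n → ∀ v : D, v ∉ M → slist L ≤ I →
      dspan v * I ≤ slist L + (M : FractionalIdeal (nonZeroDivisors D) K) * I →
      ∃ a, a ∈ I ∧ a ≠ 0 ∧ ∃ u, u ∉ M ∧
        dspan u * I ≤ sspan a + (M : FractionalIdeal (nonZeroDivisors D) K) * I := by
  intro n
  induction n with
  | zero =>
    intro L hlen v hv hLI hvI
    rw [List.length_eq_zero_iff.mp (Nat.le_zero.mp hlen)] at hvI
    rw [slist_nil, zero_add] at hvI
    exact absurd hvI (fun h => nilcase hC M hM0 hv h)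
  | succ n ih =>
    intro L hlen v hv hLI hvI
    match L with
    | [] =>
      rw [slist_nil, zero_add] at hvI
      exact absurd hvI (fun h => nilcase hC M hM0 hv h)
    | [x] =>
      by_cases hx : x = 0
      · rw [slist_cons, hx, sspan_zero, zero_add] at hvI
        refine ih [] (by simp) v hv (by rw [slist_nil]; exact zero_le I) ?_
        exact hvI
      · refine ⟨x, ?_, hx, v, hv, ?_⟩
        · exact lemem (le_trans (by rw [slist_cons]; exact leaddl) hLI)
            (mem_spanSingleton_self _ _)
        · rw [slist_cons, slist_nil, add_zero] at hvI
          exact hvI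
    | x :: y :: L₃ =>
      have hlen3 : L₃.length + 2 ≤ n + 1 := by simpa using hlen
      by_cases hx : x = 0
      · have heq : (slist (x :: y :: L₃) : FI) = slist (y :: L₃) := by
          simp [slist_cons, hx, sspan_zero]
        refine ih (y :: L₃) (by simp at hlen ⊢; omega) v hv
          (by rw [← heq]; exact hLI) (by rw [← heq]; exact hvI)
      · by_cases hy : y = 0
        · have heq : (slist (x :: y :: L₃) : FI) = slist (x :: L₃) := by
            simp [slist_cons, hy, sspan_zero]
          refine ih (x :: L₃) (by simp at hlen ⊢; omega) v hv
            (by rw [← heq]; exact hLI) (by rw [← heq]; exact hvI)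
        · by_cases hxy : x + y = 0
          · have hyx : y = -x := by linear_combination hxy
            have heq : (slist (x :: y :: L₃) : FI) = slist (x :: L₃) := by
              rw [slist_cons, slist_cons, slist_cons, hyx, sspan_neg, ← add_assoc, addself]
            refine ih (x :: L₃) (by simp at hlen ⊢; omega) v hv
              (by rw [← heq]; exact hLI) (by rw [← heq]; exact hvI)
          · -- main case
            set Q : FractionalIdeal (nonZeroDivisors D) K := slist L₃ + (M : FractionalIdeal (nonZeroDivisors D) K) * I with hQ
            set W : FractionalIdeal (nonZeroDivisors D) K := sspan x + sspan y + Q with hWdef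
            have hW : W = sspan x + sspan y + Q := rfl
            have hLW : slist (x :: y :: L₃) + (M : FractionalIdeal (nonZeroDivisors D) K) * I
                = W := by
              rw [slist_cons, slist_cons, hWdef, hQ]; ring
            have hvW : dspan v * I ≤ W := hLW ▸ hvI
            have hxI : x ∈ I := lemem (le_trans (by rw [slist_cons]; exact leaddl) hLI)
              (mem_spanSingleton_self _ _)
            have hyI : y ∈ I := lemem (le_trans
              (by rw [slist_cons, slist_cons]; exact le_trans leaddl leaddr) hLI)
              (mem_spanSingleton_self _ _)
            have hL3I : slist L₃ ≤ I := le_trans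
              (by rw [slist_cons, slist_cons]; exact le_trans leaddr leaddr) hLI
            have hWI : W ≤ I := by
              rw [hWdef, hQ]
              refine addle (addle (spanSingleton_le_iff_mem.mpr hxI)
                (spanSingleton_le_iff_mem.mpr hyI)) (addle hL3I (MIleI M))
            -- generic handler for a successful merge
            have handle : ∀ c : K, c ∈ I →
                (∃ w, w ∉ M ∧ dspan w * W ≤ sspan c + Q) →
                ∃ a, a ∈ I ∧ a ≠ 0 ∧ ∃ u, u ∉ M ∧
                  dspan u * I ≤ sspan a + (M : FractionalIdeal (nonZeroDivisors D) K) * I := by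
              rintro c hcI ⟨w, hw, hwW⟩
              refine ih (c :: L₃) (by simp; omega) (w * v) (fun hmem => ?_) ?_ ?_
              · rcases hM.isPrime.mem_or_mem hmem with h | h
                exacts [hw h, hv h]
              · rw [slist_cons]
                exact addle (spanSingleton_le_iff_mem.mpr hcI) hL3I
              · have h1 : dspan (w * v) * I = dspan w * (dspan v * I) := by
                  rw [dspan_mul]; ring
                rw [h1, slist_cons, add_assoc, ← hQ]
                exact le_trans (mul_le_mul_right hvW _) hwW
            have hprime := hM.isPrime
            rcases engine hC hI M hprime hv hx hy hW hvW hWI with hA | hB | mem1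
            · obtain ⟨w, hw, hwW⟩ := hA
              exact handle x hxI ⟨w, hw, hwW⟩
            · obtain ⟨w, hw, hwW⟩ := hB
              exact handle y hyI ⟨w, hw, hwW⟩
            · -- engine on (x, x+y)
              have hW2 : W = sspan x + sspan (x + y) + Q := by rw [hW, spadd x y]
              rcases engine hC hI M hprime hv hx hxy hW2 hvW hWI with hA | hB | mem2
              · obtain ⟨w, hw, hwW⟩ := hA
                exact handle x hxI ⟨w, hw, hwW⟩
              · obtain ⟨w, hw, hwW⟩ := hB
                exact handle (x + y) (memAddSame hxI hyI) ⟨w, hw, hwW⟩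
              · -- engine on (y, x+y)
                have hW3 : W = sspan y + sspan (x + y) + Q := by
                  rw [hW, show (sspan x + sspan y : FI) = sspan y + sspan x from add_comm _ _,
                    spadd y x, show y + x = x + y from add_comm _ _]
                rcases engine hC hI M hprime hv hy hxy hW3 hvW hWI with hA | hB | mem3
                · obtain ⟨w, hw, hwW⟩ := hA
                  exact handle y hyI ⟨w, hw, hwW⟩
                · obtain ⟨w, hw, hwW⟩ := hB
                  exact handle (x + y) (memAddSame hxI hyI) ⟨w, hw, hwW⟩
                · -- all three pairs have both coefficients in M
                  have memxx : algebraMap D K v * (x*x) ∈ (↑M * (W*W) + Q*W : FI) := by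
                    rw [show algebraMap D K v * (x*x)
                      = algebraMap D K v * (x*(x+y)) - algebraMap D K v * (x*y) by ring]
                    exact memSub mem2 mem1
                  have memyy : algebraMap D K v * (y*y) ∈ (↑M * (W*W) + Q*W : FI) := by
                    rw [show algebraMap D K v * (y*y)
                      = algebraMap D K v * (y*(x+y)) - algebraMap D K v * (x*y) by ring]
                    exact memSub mem3 mem1
                  have claim : dspan v * (W*W) ≤ ((M : FractionalIdeal (nonZeroDivisors D) K) * (W*W) + Q*W : FI) := by
                    refine le_trans (mul_le_mul_right (exp2le hW) _) ?_
                    show dspan v * (sspan (x*x) + sspan (x*y) + sspan (y*y) + Q * W)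
                        ≤ ((M : FractionalIdeal (nonZeroDivisors D) K) * (W*W) + Q*W : FI)
                    have e : dspan v * (sspan (x*x) + sspan (x*y) + sspan (y*y) + Q * W)
                        = dspan v * sspan (x*x) + dspan v * sspan (x*y)
                          + dspan v * sspan (y*y) + dspan v * (Q * W) := by ring
                    rw [e]
                    refine addle (addle (addle ?_ ?_) ?_) ?_
                    · rw [spanSingleton_mul_spanSingleton, spanSingleton_le_iff_mem]
                      exact memxx
                    · rw [spanSingleton_mul_spanSingleton, spanSingleton_le_iff_mem]
                      exact mem1
                    · rw [spanSingleton_mul_spanSingleton, spanSingleton_le_iff_mem]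
                      exact memyy
                    · calc dspan v * (Q * W) ≤ 1 * (Q * W) :=
                          mul_le_mul_left (dspan_le_one v) _
                        _ = Q * W := one_mul _
                        _ ≤ ((M : FractionalIdeal (nonZeroDivisors D) K) * (W*W) + Q*W : FI) :=
                          leaddr
                  have hMI0 : (↑M * I : FI) ≠ 0 := mulne0 (coeIdeal_ne_zero.mpr hM0) hI
                  have hHne : (↑M * W + Q : FI) ≠ 0 :=
                    ne_zero_of_le hMI0 (le_trans (leaddr (A := slist L₃)) (hQ ▸ leaddr))
                  have hOv : dspan v * (dspan v * W) ≤ ((M : FractionalIdeal (nonZeroDivisors D) K) * W + Q : FI) := by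
                    refine OvC hC hvW hWI hHne ?_
                    calc W * (dspan v * W) = dspan v * (W * W) := by ring
                      _ ≤ ((M : FractionalIdeal (nonZeroDivisors D) K) * (W*W) + Q*W : FI) :=
                        claim
                      _ = W * ((M : FractionalIdeal (nonZeroDivisors D) K) * W + Q) := by ring
                  have hQle : (↑M * W + Q : FI) ≤ Q :=
                    addle (le_trans (mulle (le_refl _) hWI) (hQ ▸ leaddr)) (le_refl Q)
                  refine ih L₃ (by omega) (v * v * v) (fun hmem => ?_) hL3I ?_
                  · rcases hM.isPrime.mem_or_mem hmem with h | h
                    · rcases hM.isPrime.mem_or_mem h with h' | h'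
                      exacts [hv h', hv h']
                    · exact hv h
                  · have h1 : dspan (v * v * v) * I = dspan (v*v) * (dspan v * I) := by
                      rw [dspan_mul, dspan_mul]; ring
                    rw [h1, ← hQ]
                    refine le_trans (mul_le_mul_right hvW _) ?_
                    show dspan (v*v) * W ≤ Q
                    have h2 : dspan (v*v) * W = dspan v * (dspan v * W) := by
                      rw [dspan_mul]; ring
                    rw [h2]
                    exact le_trans hOv hQle

lemma dspan_one : (dspan (1:D) : FI) = 1 := by
  rw [dspan, _root_.map_one]; exact spanSingleton_one

lemma slist_coe (L : List K) :
    ((slist L : FI) : Submodule D K) = Submodule.span D {a : K | a ∈ L} := by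
  induction L with
  | nil =>
    rw [slist_nil, FractionalIdeal.coe_zero]
    rw [show {a : K | a ∈ ([] : List K)} = (∅ : Set K) by ext; simp]
    rw [Submodule.span_empty]
  | cons x L ihL =>
    rw [slist_cons, FractionalIdeal.coe_add, ihL, FractionalIdeal.coe_spanSingleton]
    rw [show {a : K | a ∈ x :: L} = insert x {a : K | a ∈ L} by ext; simp]
    rw [Submodule.span_insert, Submodule.add_eq_sup]

lemma exists_slist {I : FractionalIdeal (nonZeroDivisors D) K}
    (hfg : (I : Submodule D K).FG) : ∃ L : List K, slist L = I := by
  obtain ⟨s, hs⟩ := hfg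
  refine ⟨s.toList, ?_⟩
  apply coeToSubmodule_injective
  show ((slist s.toList : FI) : Submodule D K) = (I : Submodule D K)
  rw [slist_coe, show {a : K | a ∈ s.toList} = (↑s : Set K) by ext; simp]
  exact hs

lemma coeIdeal_mul_coe (M : Ideal D) (A : FI) :
    (((M : FractionalIdeal (nonZeroDivisors D) K) * A : FI) : Submodule D K)
      = M • (A : Submodule D K) := by
  rw [FractionalIdeal.coe_mul, FractionalIdeal.coe_coeIdeal]
  apply le_antisymm
  · refine Submodule.mul_le.mpr ?_
    rintro m' hm' n hn
    rw [IsLocalization.mem_coeSubmodule] at hm'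
    obtain ⟨m, hm, rfl⟩ := hm'
    rw [← Algebra.smul_def]
    exact Submodule.smul_mem_smul hm hn
  · refine Submodule.smul_le.mpr ?_
    intro r hr n hn
    rw [Algebra.smul_def]
    exact Submodule.mul_mem_mul ((IsLocalization.mem_coeSubmodule K M).mpr ⟨r, hr, rfl⟩) hn

lemma inv_ne_zero' {I : FractionalIdeal (nonZeroDivisors D) K} (hI : I ≠ 0) : I⁻¹ ≠ 0 := by
  obtain ⟨d, hd, hdI⟩ := I.isFractional
  have hmem : algebraMap D K d ∈ I⁻¹ := by
    rw [mem_inv_iff hI]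
    intro y hy
    obtain ⟨c, hc⟩ := hdI y (FractionalIdeal.mem_coe.mpr hy)
    rw [← Algebra.smul_def]
    exact (FractionalIdeal.mem_one_iff _).mpr ⟨c, by rw [hc]⟩
  intro h0
  rw [h0, FractionalIdeal.mem_zero_iff] at hmem
  have hd0 : d ≠ 0 := nonZeroDivisors.ne_zero hd
  exact hd0 (IsFractionRing.injective D K (by rw [hmem, _root_.map_zero]))

theorem cancel_implies_invertible (I : FractionalIdeal (nonZeroDivisors D) K) (hI : I ≠ 0)
    (hfg : (I : Submodule D K).FG)
    (hC : ∀ G H : FI, G ≠ 0 → H ≠ 0 → I * G = I * H → G = H) :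
    I * I⁻¹ = 1 := by
  have hinv0 : I⁻¹ ≠ 0 := inv_ne_zero' hI
  have hE1 : I * I⁻¹ ≤ 1 := by rw [inv_eq]; exact mul_one_div_le_one
  obtain ⟨e, he⟩ := le_one_iff_exists_coeIdeal.mp hE1
  by_cases heT : e = ⊤
  · rw [← he, heT, coeIdeal_top]
  obtain ⟨M, hM, heM⟩ := Ideal.exists_le_maximal e heT
  have hE0 : I * I⁻¹ ≠ 0 := mulne0 hI hinv0
  have he0 : e ≠ ⊥ := by
    intro h
    rw [h] at he
    exact hE0 (by rw [← he, FractionalIdeal.coeIdeal_bot])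
  have hM0 : M ≠ ⊥ := by
    intro h
    exact he0 (le_bot_iff.mp (h ▸ heM))
  obtain ⟨L, hL⟩ := exists_slist hfg
  have h1M : (1:D) ∉ M := (Ideal.ne_top_iff_one M).mp hM.ne_top
  obtain ⟨a, haI, ha0, u, hu, huI⟩ :=
    mainstep hC hI M hM hM0 L.length L le_rfl 1 h1M (le_of_eq hL) (by
      rw [dspan_one, one_mul, ← hL]
      exact leaddl)
  -- determinant trick
  have hsub : ∀ z ∈ (I : Submodule D K),
      u • z ∈ Submodule.span D {a} ⊔ M • (I : Submodule D K) := by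
    intro z hz
    have h2 : algebraMap D K u * z ∈ (sspan a + (M : FractionalIdeal (nonZeroDivisors D) K) * I : FI) :=
      huI (FractionalIdeal.mul_mem_mul (mem_spanSingleton_self _ _)
        (FractionalIdeal.mem_coe.mp hz))
    rw [← FractionalIdeal.mem_coe, FractionalIdeal.coe_add, FractionalIdeal.coe_spanSingleton,
      coeIdeal_mul_coe, Submodule.add_eq_sup] at h2
    rw [show u • z = algebraMap D K u * z from Algebra.smul_def u z]
    exact h2
  obtain ⟨w, n₀, hwM, hwa⟩ := det_trick M u (Submodule.span D {a}) (I : Submodule D K) hfg hsub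
  have hw : w ∉ M := by
    intro hwin
    have : u ^ n₀ ∈ M := by
      have := M.sub_mem hwin hwM
      simpa using this
    exact hu (hM.isPrime.mem_of_pow_mem n₀ this)
  have hx0 : algebraMap D K w * a⁻¹ ∈ I⁻¹ := by
    rw [mem_inv_iff hI]
    intro y hy
    obtain ⟨c, hc⟩ := Submodule.mem_span_singleton.mp (hwa y (FractionalIdeal.mem_coe.mpr hy))
    refine (FractionalIdeal.mem_one_iff _).mpr ⟨c, ?_⟩
    have : algebraMap D K w * a⁻¹ * y = (w • y) * a⁻¹ := by
      rw [Algebra.smul_def]; ring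
    rw [this, ← hc, Algebra.smul_def, mul_assoc, mul_inv_cancel₀ ha0, mul_one]
  have hwE : algebraMap D K w ∈ I * I⁻¹ := by
    have h3 := FractionalIdeal.mul_mem_mul haI hx0
    rwa [show a * (algebraMap D K w * a⁻¹) = algebraMap D K w by field_simp] at h3
  rw [← he, FractionalIdeal.mem_coeIdeal] at hwE
  obtain ⟨m, hme, hmw⟩ := hwE
  rw [IsFractionRing.injective D K hmw] at hme
  exact absurd (heM hme) hw

end Cancel

theorem cancellation_iff_invertible (D : Type*) [CommRing D] [IsDomain D]
    (I : FractionalIdeal (nonZeroDivisors D) (FractionRing D))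
    (hI : I ≠ 0) (hfg : (I : Submodule D (FractionRing D)).FG) :
    (∀ G H : FractionalIdeal (nonZeroDivisors D) (FractionRing D),
        G ≠ 0 → H ≠ 0 → I * G = I * H → G = H) ↔ I * I⁻¹ = 1 := by
  constructor
  · intro hC
    exact cancel_implies_invertible I hI hfg hC
  · intro hinv G H hG hH hGH
    calc G = (I * I⁻¹) * G := by rw [hinv, one_mul]
      _ = I⁻¹ * (I * G) := by ring
      _ = I⁻¹ * (I * H) := by rw [hGH]
      _ = (I * I⁻¹) * H := by ring
      _ = H := by rw [hinv, one_mul]
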